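/- arXiv:1409.6463 — 11 statements merged into one kernel-verified Lean document; each statement's English description precedes it below -/
import Mathlib

section
/- Let (E,d) be a metric space, let (x_n) be a sequence in E and let x ∈ E. If x is a polar limit of (x_n), then (x_n) Δ-converges to x. -/
open Filter Metric ENNReal MeasureTheory

noncomputable section

variable {E : Type*} [MetricSpace E]

/-- A sequence `x` Δ-converges to `p`: for every subsequence and every `y`,
`limsup d(x_{k_n}, p) ≤ limsup d(x_{k_n}, y)`. -/
def DeltaConv (x : ℕ → E) (p : E) : Prop :=
  ∀ k : ℕ → ℕ, StrictMono k → ∀ y : E,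
    Filter.limsup (fun n => edist (x (k n)) p) Filter.atTop ≤
      Filter.limsup (fun n => edist (x (k n)) y) Filter.atTop

/-- A sequence `x` strong-Δ converges to `p`: `lim d(x_n,p)` exists and for every `y`,
`lim d(x_n,p) ≤ liminf d(x_n,y)`. -/
def StrongDeltaConv (x : ℕ → E) (p : E) : Prop :=
  ∃ r : ℝ, Filter.Tendsto (fun n => dist (x n) p) Filter.atTop (nhds r) ∧
    ∀ y : E, r ≤ Filter.liminf (fun n => dist (x n) y) Filter.atTop

/-- `p` is a polar limit of the sequence `x`: for every `y ≠ p`, eventually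
`d(x_n,p) < d(x_n,y)`. -/
def PolarLim (x : ℕ → E) (p : E) : Prop :=
  ∀ y : E, y ≠ p → ∃ M : ℕ, ∀ n ≥ M, dist (x n) p < dist (x n) y

/-- `c` is an asymptotic center of the sequence `x`: it minimizes
`I(y) = limsup d(x_n, y)`. -/
def AsympCenter (x : ℕ → E) (c : E) : Prop :=
  ∀ y : E, Filter.limsup (fun n => dist (x n) c) Filter.atTop ≤
    Filter.limsup (fun n => dist (x n) y) Filter.atTop

/-- A metric space is Δ-complete if every bounded sequence admits an asymptotic center. -/
def DeltaComplete (E : Type*) [MetricSpace E] : Prop :=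
  ∀ x : ℕ → E, Bornology.IsBounded (Set.range x) → ∃ c : E, AsympCenter x c

/-- The Chebyshev radius of a set `X`: `inf_z sup_{w ∈ X} d(z,w)`. -/
def chebyshevRadius (X : Set E) : ℝ≥0∞ :=
  ⨅ z : E, ⨆ w ∈ X, edist z w

/-- A metric space is a uniform SR (Staples rotund) space if there is
`δ : (0,∞)² → (0,∞)` such that for all `r, d̄ > 0` and all `x, y` with `d(x,y) ≥ d̄`,
the Chebyshev radius of `B_{r+δ}(x) ∩ B_{r+δ}(y)` is at most `r − δ`. -/
def IsUniformSR (E : Type*) [MetricSpace E] : Prop :=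
  ∃ δ : ℝ → ℝ → ℝ,
    (∀ r dbar : ℝ, 0 < r → 0 < dbar → 0 < δ r dbar) ∧
    ∀ r dbar : ℝ, 0 < r → 0 < dbar → ∀ x y : E, dbar ≤ dist x y →
      chebyshevRadius
          (Metric.closedBall x (r + δ r dbar) ∩ Metric.closedBall y (r + δ r dbar)) ≤
        ENNReal.ofReal (r - δ r dbar)

theorem PolarLim.eventually_dist_le {x : ℕ → E} {p : E} (h : PolarLim x p) (y : E) :
    ∀ᶠ n in atTop, dist (x n) p ≤ dist (x n) y := by
  rcases eq_or_ne y p with rfl | hy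
  · exact Eventually.of_forall fun _ => le_rfl
  · obtain ⟨M, hM⟩ := h y hy
    exact eventually_atTop.2 ⟨M, fun n hn => (hM n hn).le⟩

/-- a polar limit is a Δ-limit. -/
theorem stmt_2 (x : ℕ → E) (p : E) (h : PolarLim x p) : DeltaConv x p := by
  intro k hk y
  refine limsup_le_limsup ?_
  filter_upwards [hk.tendsto_atTop.eventually (h.eventually_dist_le y)] with n hn
  simpa only [edist_dist] using ENNReal.ofReal_le_ofReal hn
end
end

section
/- Let (E,d) be a metric space, let (x_n) be a bounded sequence in E and let x ∈ E. If (x_n) Δ-converges to x, then (x_n) admits a subsequence which strong-Δ converges to x. -/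
open Filter Metric ENNReal MeasureTheory

noncomputable section

variable {E : Type*} [MetricSpace E]

/-!
Bolzano–Weierstrass gives a subsequence along which `d(x_n, p)` converges, say to `r`. If some
`y` had `liminf d(x_n, y) < r` along it, a further subsequence would stay below some `b < r` in
distance to `y`, and there `limsup d(·, p) = r > b ≥ limsup d(·, y)` contradicts Δ-convergence.
-/

open Topology

theorem le_liminf_of_forall_limsup_comp_le {α : Type*} [CompleteLinearOrder α]
    [DenselyOrdered α] [TopologicalSpace α] [OrderTopology α] {u v : ℕ → α} {a : α}
    (hu : Tendsto u atTop (𝓝 a))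
    (h : ∀ φ : ℕ → ℕ, StrictMono φ → limsup (u ∘ φ) atTop ≤ limsup (v ∘ φ) atTop) :
    a ≤ liminf v atTop := by
  by_contra! hlt
  obtain ⟨b, hvb, hba⟩ := exists_between hlt
  obtain ⟨φ, hφ, hvφ⟩ :=
    extraction_of_frequently_atTop (frequently_lt_of_liminf_lt (by isBoundedDefault) hvb)
  have hu_lim : limsup (u ∘ φ) atTop = a := (hu.comp hφ.tendsto_atTop).limsup_eq
  have hv_lim : limsup (v ∘ φ) atTop ≤ b :=
    limsup_le_of_le (by isBoundedDefault) (Eventually.of_forall fun n => (hvφ n).le)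
  exact ((hu_lim ▸ h φ hφ).trans hv_lim).not_gt hba

theorem le_liminf_of_ofReal_le_liminf {u : ℕ → ℝ} {r : ℝ} (hu₀ : ∀ n, 0 ≤ u n)
    (hu : IsBoundedUnder (· ≤ ·) atTop u)
    (h : ENNReal.ofReal r ≤ liminf (fun n => ENNReal.ofReal (u n)) atTop) :
    r ≤ liminf u atTop := by
  have hcobdd : IsCoboundedUnder (· ≥ ·) atTop u := hu.isCoboundedUnder_ge
  have hbdd : IsBoundedUnder (· ≥ ·) atTop u :=
    isBoundedUnder_of_eventually_ge (Eventually.of_forall hu₀)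
  have hlim : ENNReal.ofReal (liminf u atTop) = liminf (fun n => ENNReal.ofReal (u n)) atTop :=
    ENNReal.ofReal_mono.map_liminf_of_continuousAt u ENNReal.continuous_ofReal.continuousAt
      hcobdd hbdd
  exact (ENNReal.ofReal_le_ofReal_iff (le_liminf_of_le hcobdd (Eventually.of_forall hu₀))).1
    (h.trans_eq hlim.symm)

/-- a bounded Δ-convergent sequence has a subsequence which
strong-Δ converges to the same point. -/
theorem stmt_5 (x : ℕ → E) (p : E) (hb : Bornology.IsBounded (Set.range x))
    (h : DeltaConv x p) :
    ∃ k : ℕ → ℕ, StrictMono k ∧ StrongDeltaConv (fun n => x (k n)) p := by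
  obtain ⟨C, hC⟩ := hb.subset_closedBall p
  obtain ⟨r, -, k, hk, hkr⟩ := tendsto_subseq_of_bounded (x := fun n => dist (x n) p)
    (Metric.isBounded_Icc 0 C) fun n => ⟨dist_nonneg, hC ⟨n, rfl⟩⟩
  refine ⟨k, hk, r, hkr, fun y => ?_⟩
  obtain ⟨D, hD⟩ := hb.subset_closedBall y
  have hy_bdd : IsBoundedUnder (· ≤ ·) atTop fun n => dist (x (k n)) y :=
    isBoundedUnder_of_eventually_le (a := D) (Eventually.of_forall fun n => hD ⟨k n, rfl⟩)
  have hkr' : Tendsto (fun n => edist (x (k n)) p) atTop (𝓝 (ENNReal.ofReal r)) := by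
    simpa only [edist_dist, Function.comp_def] using ENNReal.tendsto_ofReal hkr
  have hy : ENNReal.ofReal r ≤ liminf (fun n => edist (x (k n)) y) atTop :=
    le_liminf_of_forall_limsup_comp_le hkr' fun φ hφ => h (k ∘ φ) (hk.comp hφ) y
  simp only [edist_dist] at hy
  exact le_liminf_of_ofReal_le_liminf (fun n => dist_nonneg) hy_bdd hy
end
end

section
/- Let (E,d) be a metric space, let x ∈ E and let (x_n) be a sequence in E whose range is totally bounded (in particular, this holds if (x_n) is a Cauchy sequence). If (x_n) Δ-converges to x, then d(x_n,x) → 0, i.e. (x_n) converges to x in the metric. -/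
/-! Every subsequence of `x` has a further subsequence that is Cauchy, because the range is
totally bounded. Testing Δ-convergence of that Cauchy subsequence against `y = x_N` gives
`limsup d(x_n, p) ≤ limsup d(x_n, x_N) ≤ ε`, so it converges to `p`; hence so does `x`. -/

open Filter Metric ENNReal MeasureTheory

noncomputable section

variable {E : Type*} [MetricSpace E]

theorem TotallyBounded.exists_cauchySeq_subseq {α : Type*} [PseudoMetricSpace α] {s : Set α}
    (hs : TotallyBounded s) {u : ℕ → α} (hu : ∀ n, u n ∈ s) :
    ∃ φ : ℕ → ℕ, StrictMono φ ∧ CauchySeq (u ∘ φ) := by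
  -- In the completion the closure of `s` is compact; pull back a convergent subsequence.
  let ι : α → UniformSpace.Completion α := (↑)
  have hι : Isometry ι := UniformSpace.Completion.coe_isometry
  have hK := (hs.image hι.uniformContinuous).closure.isCompact_of_isClosed isClosed_closure
  obtain ⟨_, -, φ, hφ, hlim⟩ :=
    hK.tendsto_subseq fun n => subset_closure (Set.mem_image_of_mem ι (hu n))
  exact ⟨φ, hφ, hι.isUniformInducing.cauchy_map_iff.mp hlim.cauchySeq⟩

theorem DeltaConv.comp {x : ℕ → E} {p : E} (h : DeltaConv x p) {φ : ℕ → ℕ}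
    (hφ : StrictMono φ) : DeltaConv (x ∘ φ) p :=
  fun k hk y => h (φ ∘ k) (hφ.comp hk) y

theorem DeltaConv.tendsto_of_cauchySeq {x : ℕ → E} {p : E} (h : DeltaConv x p)
    (hx : CauchySeq x) : Tendsto x atTop (nhds p) := by
  have hlimsup : limsup (fun n => edist (x n) p) atTop ≤ 0 := by
    refine le_of_forall_gt_imp_ge_of_dense fun ε hε => ?_
    obtain ⟨N, hN⟩ := EMetric.cauchySeq_iff'.mp hx ε hε
    calc limsup (fun n => edist (x n) p) atTop
        ≤ limsup (fun n => edist (x n) (x N)) atTop := h id strictMono_id (x N)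
      _ ≤ ε := limsup_le_of_le (by isBoundedDefault)
          (eventually_atTop.2 ⟨N, fun n hn => (hN n hn).le⟩)
  exact tendsto_iff_edist_tendsto_0.2 (tendsto_of_le_liminf_of_limsup_le zero_le hlimsup)

/-- a Δ-convergent sequence with totally bounded range converges in metric. -/
theorem stmt_6 (x : ℕ → E) (p : E) (htb : TotallyBounded (Set.range x))
    (h : DeltaConv x p) :
    Filter.Tendsto (fun n => dist (x n) p) Filter.atTop (nhds 0) := by
  rw [← tendsto_iff_dist_tendsto_zero]
  refine tendsto_of_subseq_tendsto fun ns hns => ?_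
  obtain ⟨φ, hφ, hnsφ⟩ := strictMono_subseq_of_tendsto_atTop hns
  obtain ⟨ψ, hψ, hcauchy⟩ :=
    htb.exists_cauchySeq_subseq fun n => Set.mem_range_self (ns (φ n))
  exact ⟨φ ∘ ψ, (h.comp (hnsφ.comp hψ)).tendsto_of_cauchySeq hcauchy⟩
end
end

section
/- Let (E,d) be a Δ-complete metric space. Then every bounded sequence in E has a subsequence which strong-Δ converges to some point of E. -/
open Filter Metric ENNReal MeasureTheory

noncomputable section

variable {E : Type*} [MetricSpace E]

/-!
Call a subsequence *regular* if its asymptotic radius does not drop when passing to any further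
subsequence. Asymptotic radii only decrease along subsequences, so choosing nested subsequences
whose radii come within `1/m` of the infimum over their own subsequences, and then a common
subsequence of all of them, gives a regular subsequence `y` of `x`. Let `c` be an asymptotic
center of `y`, so that `limsup d(yₙ, c)` is the asymptotic radius `ρ` of `y`. If
`liminf d(yₙ, z) < ρ` for some `z`, the terms of `y` close to `z` would form a subsequence of
radius `< ρ`, contradicting regularity. Hence `ρ ≤ liminf d(yₙ, z)` for all `z`, and for `z = c`
this forces `d(yₙ, c) → ρ`.
-/

open Filter Topology Bornology Set

/-- The infimum of the filters `map (k m) atTop` is countably generated and nontrivial, so some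
subsequence tends to it. -/
theorem exists_strictMono_map_le_of_antitone {k : ℕ → ℕ → ℕ} (hk : ∀ m, StrictMono (k m))
    (hanti : Antitone fun m => map (k m) atTop) :
    ∃ φ : ℕ → ℕ, StrictMono φ ∧ ∀ m, map φ atTop ≤ map (k m) atTop := by
  have : (⨅ m, map (k m) atTop).NeBot :=
    iInf_neBot_of_directed' hanti.directed_ge fun _ => map_neBot
  have hle : ⨅ m, map (k m) atTop ≤ atTop := iInf_le_of_le 0 (hk 0).tendsto_atTop
  obtain ⟨φ, hφ, hφF⟩ := subseq_tendsto_of_neBot (u := id) (f := ⨅ m, map (k m) atTop)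
    (by rwa [map_id, inf_of_le_left hle])
  exact ⟨φ, hφ, fun m => hφF.trans (iInf_le _ m)⟩

/-- Subsequences `k` enter through the filters `map k atTop`: `map k' atTop ≤ map k atTop` says
that `k'` is eventually a subsequence of `k`, which is all a diagonal subsequence satisfies. -/
theorem exists_strictMono_forall_le_comp {R : Filter ℕ → ℝ≥0∞} (hR : Monotone R)
    (htop : R atTop ≠ ⊤) :
    ∃ k : ℕ → ℕ, StrictMono k ∧
      ∀ j : ℕ → ℕ, StrictMono j → R (map k atTop) ≤ R (map (k ∘ j) atTop) := by
  let r : (ℕ → ℕ) → ℝ≥0∞ := fun k =>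
    ⨅ (k' : ℕ → ℕ) (_ : StrictMono k') (_ : map k' atTop ≤ map k atTop), R (map k' atTop)
  have step : ∀ k, StrictMono k → ∀ m : ℕ, ∃ k' : ℕ → ℕ, StrictMono k' ∧
      map k' atTop ≤ map k atTop ∧ R (map k' atTop) < r k + (m : ℝ≥0∞)⁻¹ := by
    intro k hk m
    have hr : r k ≠ ⊤ := ne_top_of_le_ne_top htop <|
      ((iInf₂_le k hk).trans (iInf_le _ le_rfl)).trans (hR (hk.tendsto_atTop : map k atTop ≤ atTop))
    have := ENNReal.lt_add_right hr (ENNReal.inv_ne_zero.2 (ENNReal.natCast_ne_top m))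
    simpa only [r, iInf_lt_iff, exists_prop] using this
  choose! next hnext_mono hnext_le hnext_lt using step
  let K : ℕ → ℕ → ℕ := fun m => Nat.rec id (fun m k => next k m) m
  have hK : ∀ m, StrictMono (K m) := by
    intro m
    induction m with
    | zero => exact strictMono_id
    | succ m ih => exact hnext_mono _ ih m
  obtain ⟨φ, hφ, hφK⟩ := exists_strictMono_map_le_of_antitone hK
    (antitone_nat_of_succ_le fun m => hnext_le _ (hK m) m)
  refine ⟨φ, hφ, fun j hj => ?_⟩
  have hclose : ∀ m : ℕ, R (map φ atTop) ≤ R (map (φ ∘ j) atTop) + (m : ℝ≥0∞)⁻¹ := by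
    intro m
    have hφj : map (φ ∘ j) atTop ≤ map (K m) atTop :=
      Tendsto.comp (hφK m) hj.tendsto_atTop
    calc R (map φ atTop) ≤ R (map (K (m + 1)) atTop) := hR (hφK (m + 1))
      _ ≤ r (K m) + (m : ℝ≥0∞)⁻¹ := (hnext_lt _ (hK m) m).le
      _ ≤ R (map (φ ∘ j) atTop) + (m : ℝ≥0∞)⁻¹ := by
        gcongr
        exact (iInf₂_le _ (hφ.comp hj)).trans (iInf_le _ hφj)
  simpa using ge_of_tendsto' (tendsto_const_nhds.add ENNReal.tendsto_inv_nat_nhds_zero) hclose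

theorem le_liminf_of_forall_le_limsup_comp {α : Type*} [CompleteLinearOrder α] [DenselyOrdered α]
    {u : ℕ → α} {a : α} (h : ∀ j : ℕ → ℕ, StrictMono j → a ≤ limsup (u ∘ j) atTop) :
    a ≤ liminf u atTop := by
  by_contra! hlt
  obtain ⟨b, hub, hba⟩ := exists_between hlt
  obtain ⟨j, hj, hjb⟩ :=
    extraction_of_frequently_atTop (frequently_lt_of_liminf_lt (by isBoundedDefault) hub)
  exact hba.not_ge <| (h j hj).trans <|
    limsup_le_of_le (by isBoundedDefault) (Eventually.of_forall fun n => (hjb n).le)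

/-- Along `map k atTop` this is the asymptotic radius of the subsequence `x ∘ k`. -/
def asympRadius {α : Type*} [PseudoEMetricSpace α] (x : ℕ → α) (F : Filter ℕ) : ℝ≥0∞ :=
  ⨅ z, limsup (fun n => edist (x n) z) F

theorem asympRadius_mono {α : Type*} [PseudoEMetricSpace α] (x : ℕ → α) :
    Monotone (asympRadius x) :=
  fun _ _ hFG => iInf_mono fun _ => limsup_le_limsup_of_le hFG

theorem asympRadius_atTop_ne_top {x : ℕ → E} (hx : IsBounded (range x)) :
    asympRadius x atTop ≠ ⊤ := by
  obtain ⟨C, hC⟩ := (isBounded_iff_subset_closedBall (x 0)).1 hx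
  refine ne_top_of_le_ne_top (ENNReal.ofReal_ne_top (r := C)) <| (iInf_le _ (x 0)).trans <|
    limsup_le_of_le (by isBoundedDefault) (Eventually.of_forall fun n => ?_)
  rw [edist_dist]
  exact ENNReal.ofReal_le_ofReal (hC (mem_range_self n))

section BoundedRange

variable {y : ℕ → E} (hy : IsBounded (range y)) (z : E)
include hy

theorem isBoundedUnder_le_dist : IsBoundedUnder (· ≤ ·) atTop fun n => dist (y n) z := by
  obtain ⟨C, hC⟩ := (isBounded_iff_subset_closedBall z).1 hy
  exact isBoundedUnder_of ⟨C, fun n => hC (mem_range_self n)⟩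

theorem ofReal_limsup_dist :
    ENNReal.ofReal (limsup (fun n => dist (y n) z) atTop) =
      limsup (fun n => edist (y n) z) atTop := by
  simp only [edist_dist]
  exact ENNReal.ofReal_limsup (isBoundedUnder_of ⟨0, fun _ => dist_nonneg⟩).isCoboundedUnder_flip
    (isBoundedUnder_le_dist hy z)

theorem ofReal_liminf_dist :
    ENNReal.ofReal (liminf (fun n => dist (y n) z) atTop) =
      liminf (fun n => edist (y n) z) atTop := by
  simp only [edist_dist]
  exact ENNReal.ofReal_mono.map_liminf_of_continuousAt _
    ENNReal.continuous_ofReal.continuousAt (isBoundedUnder_le_dist hy z).isCoboundedUnder_flip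
    (isBoundedUnder_of ⟨0, fun _ => dist_nonneg⟩)

end BoundedRange

theorem strongDeltaConv_of_asympCenter {y : ℕ → E} (hy : IsBounded (range y)) {c : E}
    (hc : AsympCenter y c)
    (hreg : ∀ j : ℕ → ℕ, StrictMono j → asympRadius y atTop ≤ asympRadius (y ∘ j) atTop) :
    StrongDeltaConv y c := by
  set ρ := asympRadius y atTop
  have hρ_le_liminf : ∀ z, ρ ≤ liminf (fun n => edist (y n) z) atTop := fun z =>
    le_liminf_of_forall_le_limsup_comp fun j hj => (hreg j hj).trans (iInf_le _ z)
  have hlimsup_le_ρ : limsup (fun n => edist (y n) c) atTop ≤ ρ := le_iInf fun z => by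
    rw [← ofReal_limsup_dist hy, ← ofReal_limsup_dist hy]
    exact ENNReal.ofReal_le_ofReal (hc z)
  have hρ_ne_top : ρ ≠ ⊤ := ne_top_of_le_ne_top ENNReal.ofReal_ne_top <|
    (iInf_le _ c).trans (ofReal_limsup_dist hy c).ge
  have htends : Tendsto (fun n => edist (y n) c) atTop (𝓝 ρ) :=
    tendsto_of_le_liminf_of_limsup_le (hρ_le_liminf c) hlimsup_le_ρ
  refine ⟨ρ.toReal, ?_, fun z => ?_⟩
  · simpa [Function.comp_def, dist_edist] using (ENNReal.tendsto_toReal hρ_ne_top).comp htends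
  · refine ENNReal.toReal_le_of_le_ofReal ?_
      ((hρ_le_liminf z).trans (ofReal_liminf_dist hy z).ge)
    exact le_liminf_of_le (isBoundedUnder_le_dist hy z).isCoboundedUnder_flip
      (Eventually.of_forall fun _ => dist_nonneg)

/-- in a Δ-complete metric space, every bounded sequence has a
strong-Δ convergent subsequence. -/
theorem stmt_7 (hE : DeltaComplete E) (x : ℕ → E) (hb : Bornology.IsBounded (Set.range x)) :
    ∃ (k : ℕ → ℕ) (p : E), StrictMono k ∧ StrongDeltaConv (fun n => x (k n)) p := by
  obtain ⟨k, hk, hreg⟩ :=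
    exists_strictMono_forall_le_comp (asympRadius_mono x) (asympRadius_atTop_ne_top hb)
  have hy : IsBounded (range (x ∘ k)) := hb.subset (range_comp_subset_range k x)
  obtain ⟨c, hc⟩ := hE _ hy
  exact ⟨k, c, hk, strongDeltaConv_of_asympCenter hy hc hreg⟩
end
end

section
/- Every uniformly convex Banach space, with the metric induced by its norm, is a uniform SR (Staples rotund) metric space. -/
open Filter Metric ENNReal MeasureTheory

noncomputable section

variable {E : Type*} [MetricSpace E]

/-!
For `x, y` at distance at least `d̄`, the midpoint `m` of `x` and `y` is the center that works:
if `w` lies in both balls of radius `s = r + δ`, then `w - x` and `w - y` lie in the ball of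
radius `s` and are at least `d̄ ≥ (d̄ / 2r) s` apart, so uniform convexity gives
`‖m - w‖ = ‖(w - x) + (w - y)‖ / 2 ≤ (1 - η / 2) s`, which is at most `r - δ` once `δ` is a
small multiple of `r η`.
-/

theorem chebyshevRadius_le_ofReal {X : Set E} (z : E) {c : ℝ}
    (h : ∀ w ∈ X, dist z w ≤ c) : chebyshevRadius X ≤ ENNReal.ofReal c :=
  (iInf_le _ z).trans <| iSup₂_le fun w hw => by
    rw [edist_dist]
    exact ENNReal.ofReal_le_ofReal (h w hw)

section UniformConvex

variable {F : Type*} [NormedAddCommGroup F] [NormedSpace ℝ F] [UniformConvexSpace F]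

theorem exists_forall_closedBall_norm_add_le_two_sub_mul {ε : ℝ} (hε : 0 < ε) :
    ∃ η, 0 < η ∧ ∀ ⦃s : ℝ⦄, 0 < s → ∀ ⦃u v : F⦄, ‖u‖ ≤ s → ‖v‖ ≤ s →
      ε * s ≤ ‖u - v‖ → ‖u + v‖ ≤ (2 - η) * s := by
  obtain ⟨η, hη, h⟩ := exists_forall_closed_ball_dist_add_le_two_sub F hε
  refine ⟨η, hη, fun s hs u v hu hv huv => ?_⟩
  have hscale : ∀ z : F, ‖s⁻¹ • z‖ = ‖z‖ / s := fun z => by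
    rw [norm_smul_of_nonneg (inv_nonneg.2 hs.le), inv_mul_eq_div]
  have := @h (s⁻¹ • u) (by rw [hscale, div_le_one hs]; exact hu) (s⁻¹ • v)
    (by rw [hscale, div_le_one hs]; exact hv)
    (by rw [← smul_sub, hscale, le_div_iff₀ hs]; exact huv)
  rwa [← smul_add, hscale, div_le_iff₀ hs] at this

theorem exists_forall_dist_midpoint_le_sub {r d : ℝ} (hr : 0 < r) (hd : 0 < d) :
    ∃ δ, 0 < δ ∧ ∀ x y w : F, d ≤ dist x y → dist w x ≤ r + δ → dist w y ≤ r + δ →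
      dist (midpoint ℝ x y) w ≤ r - δ := by
  obtain ⟨η, hη, h⟩ := exists_forall_closedBall_norm_add_le_two_sub_mul (F := F)
    (div_pos hd (mul_pos two_pos hr))
  set δ := r * min η 1 / 4
  have hδ : 0 < δ := by positivity
  have hδη : δ ≤ r * η / 4 := by have := min_le_left η 1; unfold δ; gcongr
  have hδr : δ ≤ r := by have := min_le_right η 1; unfold δ; nlinarith
  refine ⟨δ, hδ, fun x y w hxy hwx hwy => ?_⟩
  rw [dist_eq_norm] at hxy hwx hwy
  have hsep : d / (2 * r) * (r + δ) ≤ ‖(w - x) - (w - y)‖ := by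
    rw [show (w - x) - (w - y) = y - x by abel, norm_sub_rev, div_mul_eq_mul_div,
      div_le_iff₀ (by positivity)]
    nlinarith
  have hsum := h (by positivity) hwx hwy hsep
  have hmid : midpoint ℝ x y - w = -((2 : ℝ)⁻¹ • ((w - x) + (w - y))) := by
    rw [midpoint_eq_smul_add, invOf_eq_inv]
    module
  rw [dist_eq_norm, hmid, norm_neg, norm_smul, Real.norm_of_nonneg (by norm_num)]
  calc 2⁻¹ * ‖(w - x) + (w - y)‖ ≤ 2⁻¹ * ((2 - η) * (r + δ)) := by gcongr
    _ ≤ r - δ := by nlinarith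

end UniformConvex

theorem stmt_8_general (F : Type*) [NormedAddCommGroup F] [NormedSpace ℝ F]
    [UniformConvexSpace F] : IsUniformSR F := by
  choose! δ hδ hmid using fun (r d : ℝ) (hr : 0 < r) (hd : 0 < d) =>
    exists_forall_dist_midpoint_le_sub (F := F) hr hd
  exact ⟨δ, hδ, fun r d hr hd x y hxy => chebyshevRadius_le_ofReal (midpoint ℝ x y)
    fun w hw => hmid r d hr hd x y w hxy hw.1 hw.2⟩

/-- every uniformly convex Banach space is a uniform SR metric space. -/
theorem stmt_8 (F : Type*) [NormedAddCommGroup F] [NormedSpace ℝ F]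
    [UniformConvexSpace F] [CompleteSpace F] : IsUniformSR F :=
  stmt_8_general F
end
end

section
/- Let (E,d) be a uniform SR (Staples rotund) metric space, let (x_n) be a bounded sequence in E and let x ∈ E be such that limsup_n ( d(x_n,x) − d(x_n,y) ) ≤ 0 for every y ∈ E. Then for each z ∈ E with z ≠ x there exist a constant c > 0 and n₀ ∈ ℕ such that d(x_n,x) ≤ d(x_n,z) − c for all n ≥ n₀; in particular, x is a polar limit of (x_n). -/
open Filter Metric ENNReal MeasureTheory

noncomputable section

variable {E : Type*} [MetricSpace E]

/-!
If `z ≠ p` and `d(x_n, z) - d(x_n, p)` does not stay above a positive constant, pass to a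
subsequence along which this difference tends to `0` and `d(x_n, p) → ρ`; the triangle inequality
gives `ρ ≥ d(p, z) / 2 > 0`. Eventually `x_n` lies in `B_{ρ+η}(p) ∩ B_{ρ+η}(z)`, whose Chebyshev
radius is below `ρ - η` by uniform rotundity, so a center `w` has `d(x_n, w) < ρ - η` while
`d(x_n, p) → ρ`. This contradicts `limsup (d(x_n, p) - d(x_n, w)) ≤ 0`.
-/

open Topology

theorem chebyshevRadius_mono {X Y : Set E} (h : X ⊆ Y) : chebyshevRadius X ≤ chebyshevRadius Y :=
  iInf_mono fun _ => biSup_mono fun _ hw => h hw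

theorem exists_forall_dist_lt_of_chebyshevRadius_lt {X : Set E} {r : ℝ}
    (h : chebyshevRadius X < ENNReal.ofReal r) : ∃ w : E, ∀ v ∈ X, dist v w < r := by
  obtain ⟨w, hw⟩ := iInf_lt_iff.mp h
  refine ⟨w, fun v hv => ?_⟩
  rw [dist_comm, ← edist_lt_ofReal]
  exact (le_iSup₂ (f := fun v (_ : v ∈ X) => edist w v) v hv).trans_lt hw

theorem IsUniformSR.exists_center (hSR : IsUniformSR E) {p z : E} (hpz : p ≠ z) {ρ : ℝ}
    (hρ : 0 < ρ) : ∃ η > 0, ∃ w : E, ∀ v : E,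
      dist v p ≤ ρ + η → dist v z ≤ ρ + η → dist v w < ρ - η := by
  obtain ⟨δ, hδpos, hδ⟩ := hSR
  set δ₀ := δ ρ (dist p z)
  have hδ₀ : 0 < δ₀ := hδpos ρ _ hρ (dist_pos.mpr hpz)
  set η := min δ₀ ρ / 2
  have hηδ₀ : 2 * η ≤ δ₀ := by simp only [η]; linarith [min_le_left δ₀ ρ]
  have hηρ : 2 * η ≤ ρ := by simp only [η]; linarith [min_le_right δ₀ ρ]
  have hη : 0 < η := by positivity
  have hcheb : chebyshevRadius (closedBall p (ρ + η) ∩ closedBall z (ρ + η)) <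
      ENNReal.ofReal (ρ - η) := by
    refine (chebyshevRadius_mono (Set.inter_subset_inter ?_ ?_)).trans_lt
      ((hδ ρ _ hρ (dist_pos.mpr hpz) p z le_rfl).trans_lt ?_)
    · exact closedBall_subset_closedBall (by linarith)
    · exact closedBall_subset_closedBall (by linarith)
    · exact (ENNReal.ofReal_lt_ofReal_iff (by linarith)).mpr (by linarith)
  obtain ⟨w, hw⟩ := exists_forall_dist_lt_of_chebyshevRadius_lt hcheb
  exact ⟨η, hη, w, fun v hvp hvz => hw v ⟨mem_closedBall.mpr hvp, mem_closedBall.mpr hvz⟩⟩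

theorem IsUniformSR.not_eventually_dist_le_add {ι : Type*} {l : Filter ι} [l.NeBot]
    (hSR : IsUniformSR E) {v : ι → E} {p z : E} {ρ : ℝ} (hpz : p ≠ z)
    (hρ : Tendsto (fun i => dist (v i) p) l (𝓝 ρ))
    (hw : ∀ w : E, ∀ ε > 0, ∀ᶠ i in l, dist (v i) p ≤ dist (v i) w + ε) :
    ¬ ∀ ε > 0, ∀ᶠ i in l, dist (v i) z ≤ dist (v i) p + ε := by
  intro hz
  have hdist : ∀ i, dist p z ≤ dist (v i) p + dist (v i) z := fun i =>
    (dist_triangle p (v i) z).trans_eq (by rw [dist_comm])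
  have hρpos : 0 < ρ := by
    by_contra! hρ0
    have hd : 0 < dist p z / 3 := by have := dist_pos.mpr hpz; positivity
    have hsmall := hρ.eventually (eventually_lt_nhds (show ρ < dist p z / 3 by linarith))
    obtain ⟨i, hip, hiz⟩ := (hsmall.and (hz _ hd)).exists
    linarith [hdist i]
  obtain ⟨η, hη, w, hcenter⟩ := hSR.exists_center hpz hρpos
  have hnear : ∀ᶠ i in l, dist (dist (v i) p) ρ < η / 2 :=
    Metric.tendsto_nhds.mp hρ _ (half_pos hη)
  obtain ⟨i, hip, hiz, hiw⟩ :=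
    (hnear.and ((hz _ (half_pos hη)).and (hw w _ (half_pos hη)))).exists
  obtain ⟨hip₁, hip₂⟩ := abs_lt.mp (Real.dist_eq _ _ ▸ hip)
  have := hcenter (v i) (by linarith) (by linarith)
  linarith

theorem eventually_dist_le_add_of_limsup_sub_le {ι : Type*} {l : Filter ι} {x : ι → E} {p y : E}
    (h : limsup (fun i => dist (x i) p - dist (x i) y) l ≤ 0) {ε : ℝ} (hε : 0 < ε) :
    ∀ᶠ i in l, dist (x i) p ≤ dist (x i) y + ε := by
  have hbdd : IsBoundedUnder (· ≤ ·) l (fun i => dist (x i) p - dist (x i) y) :=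
    isBoundedUnder_of ⟨dist y p, fun i => by linarith [dist_triangle (x i) y p]⟩
  filter_upwards [eventually_lt_of_limsup_lt (h.trans_lt hε) hbdd] with i hi
  linarith

theorem exists_strictMono_forall_eventually_lt {f : ℕ → ℝ} (hf : ∀ c > 0, ∃ᶠ n in atTop, f n < c) :
    ∃ φ : ℕ → ℕ, StrictMono φ ∧ ∀ ε > 0, ∀ᶠ n in atTop, f (φ n) < ε := by
  obtain ⟨φ, hφ, hφf⟩ := extraction_forall_of_frequently fun n : ℕ =>
    hf (1 / ((n : ℝ) + 1)) Nat.one_div_pos_of_nat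
  refine ⟨φ, hφ, fun ε hε => ?_⟩
  filter_upwards [tendsto_one_div_add_atTop_nhds_zero_nat.eventually (eventually_lt_nhds hε)]
    with n hn
  exact (hφf n).trans hn

theorem exists_strictMono_tendsto_dist {x : ℕ → E} (hb : Bornology.IsBounded (Set.range x))
    (p : E) : ∃ ρ : ℝ, ∃ ψ : ℕ → ℕ, StrictMono ψ ∧
      Tendsto (fun n => dist (x (ψ n)) p) atTop (𝓝 ρ) := by
  obtain ⟨R, hR⟩ := hb.subset_closedBall p
  obtain ⟨ρ, -, ψ, hψ, hρ⟩ := tendsto_subseq_of_bounded (isBounded_Icc 0 R)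
    fun n => ⟨dist_nonneg, mem_closedBall.mp (hR ⟨n, rfl⟩)⟩
  exact ⟨ρ, ψ, hψ, hρ⟩

/-- in a uniform SR space, if `x` is a bounded sequence and
`limsup (d(x_n,p) − d(x_n,y)) ≤ 0` for all `y`, then for every `z ≠ p` one has
`d(x_n,p) ≤ d(x_n,z) − c` eventually, for some `c > 0`; in particular `p` is a polar
limit of `x`. -/
theorem stmt_9 (hSR : IsUniformSR E) (x : ℕ → E) (p : E)
    (hb : Bornology.IsBounded (Set.range x))
    (h : ∀ y : E, Filter.limsup (fun n => dist (x n) p - dist (x n) y) Filter.atTop ≤ 0) :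
    (∀ z : E, z ≠ p → ∃ c : ℝ, 0 < c ∧ ∃ n₀ : ℕ, ∀ n ≥ n₀,
      dist (x n) p ≤ dist (x n) z - c) ∧ PolarLim x p := by
  have hsep : ∀ z : E, z ≠ p → ∃ c : ℝ, 0 < c ∧ ∃ n₀ : ℕ, ∀ n ≥ n₀,
      dist (x n) p ≤ dist (x n) z - c := by
    intro z hz
    by_contra! hcon
    obtain ⟨φ, hφ, hφz⟩ := exists_strictMono_forall_eventually_lt
      (f := fun n => dist (x n) z - dist (x n) p) fun c hc =>
        frequently_atTop.mpr fun n₀ => (hcon c hc n₀).imp fun _ ⟨hn, hlt⟩ => ⟨hn, by linarith⟩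
    obtain ⟨ρ, ψ, hψ, hρ⟩ :=
      exists_strictMono_tendsto_dist (hb.subset (Set.range_comp_subset_range φ x)) p
    refine hSR.not_eventually_dist_le_add (v := x ∘ φ ∘ ψ) hz.symm hρ
      (fun w ε hε => (hφ.comp hψ).tendsto_atTop.eventually
        (eventually_dist_le_add_of_limsup_sub_le (h w) hε)) fun ε hε => ?_
    filter_upwards [hψ.tendsto_atTop.eventually (hφz ε hε)] with n hn
    simp only [Function.comp_apply] at hn ⊢
    linarith
  refine ⟨hsep, fun y hy => ?_⟩
  obtain ⟨c, hc, n₀, hn₀⟩ := hsep y hy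
  exact ⟨n₀, fun n hn => (hn₀ n hn).trans_lt (by linarith)⟩
end
end

section
/- Let (E,d) be a uniform SR (Staples rotund) metric space, let (x_n) be a bounded sequence in E and let x ∈ E. Then (x_n) Δ-converges to x if and only if x is a polar limit of (x_n). -/
/-!
Polar limit ⇒ Δ-limit holds in any metric space: along every subsequence, `d(xₙ, p)` is eventually
dominated by `d(xₙ, y)`. Conversely, if `y ≠ p` but `d(xₙ, y) ≤ d(xₙ, p)` for infinitely many `n`,
pass to that subsequence and let `r = limsup d(xₙ, p)`, which is finite by boundedness and positive
since the subsequence cannot converge to both `p` and `y`. Eventually the subsequence lies in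
`B_{r+δ}(p) ∩ B_{r+δ}(y)` for the uniform SR constant `δ = δ(r, d(p, y))`, and that set has Chebyshev
radius at most `r - δ < r`; a near-center `z` then has `limsup d(xₙ, z) < r`, contradicting
Δ-convergence to `p`.
-/

open Filter Metric ENNReal MeasureTheory

noncomputable section

variable {E : Type*} [MetricSpace E]

open Topology

theorem PolarLim.deltaConv {x : ℕ → E} {p : E} (h : PolarLim x p) : DeltaConv x p := by
  intro k hk y
  rcases eq_or_ne y p with rfl | hyp
  · exact le_rfl
  obtain ⟨M, hM⟩ := h y hyp
  refine limsup_le_limsup (eventually_atTop.mpr ⟨M, fun n hn => ?_⟩)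
  simp only [edist_dist]
  exact ofReal_le_ofReal (hM (k n) (hn.trans hk.le_apply)).le

theorem limsup_edist_lt_top {u : ℕ → E} (hu : Bornology.IsBounded (Set.range u)) (p : E) :
    limsup (fun n => edist (u n) p) atTop < ⊤ := by
  obtain ⟨C, hC⟩ := hu.subset_closedBall p
  refine (limsup_le_of_le (h := Eventually.of_forall fun n => ?_)).trans_lt
    (ofReal_lt_top (r := C))
  exact (edist_dist _ _).le.trans (ofReal_le_ofReal (hC ⟨n, rfl⟩))

theorem tendsto_of_limsup_edist_eq_zero {ι : Type*} {l : Filter ι} {u : ι → E} {p : E}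
    (h : limsup (fun i => edist (u i) p) l = 0) : Tendsto u l (𝓝 p) :=
  tendsto_iff_edist_tendsto_0.mpr (tendsto_of_le_liminf_of_limsup_le bot_le h.le)

theorem limsup_edist_ne_zero {ι : Type*} {l : Filter ι} [l.NeBot] {u : ι → E} {p y : E}
    (hyp : y ≠ p) (hle : ∀ᶠ i in l, edist (u i) y ≤ edist (u i) p) :
    limsup (fun i => edist (u i) p) l ≠ 0 := by
  intro h0
  have hy : limsup (fun i => edist (u i) y) l = 0 :=
    le_antisymm (h0 ▸ limsup_le_limsup hle) bot_le
  exact hyp (tendsto_nhds_unique (tendsto_of_limsup_edist_eq_zero hy)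
    (tendsto_of_limsup_edist_eq_zero h0))

theorem exists_limsup_edist_lt_of_chebyshevRadius_lt {ι : Type*} {l : Filter ι} {u : ι → E}
    {X : Set E} {c : ℝ≥0∞} (hX : ∀ᶠ i in l, u i ∈ X) (hc : chebyshevRadius X < c) :
    ∃ z, limsup (fun i => edist (u i) z) l < c := by
  obtain ⟨z, hz⟩ := iInf_lt_iff.mp hc
  refine ⟨z, (limsup_le_of_le (h := ?_)).trans_lt hz⟩
  filter_upwards [hX] with i hi
  rw [edist_comm]
  exact le_iSup₂ (f := fun w (_ : w ∈ X) => edist z w) (u i) hi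

theorem IsUniformSR.exists_chebyshevRadius_lt (hSR : IsUniformSR E) {p y : E} (hpy : p ≠ y)
    {r : ℝ} (hr : 0 < r) :
    ∃ δ > 0, chebyshevRadius (closedBall p (r + δ) ∩ closedBall y (r + δ)) < ENNReal.ofReal r := by
  obtain ⟨δ, hδpos, hcheb⟩ := hSR
  have hd : 0 < dist p y := dist_pos.mpr hpy
  have hδ := hδpos r _ hr hd
  exact ⟨δ r (dist p y), hδ, (hcheb r _ hr hd p y le_rfl).trans_lt
    ((ofReal_lt_ofReal_iff hr).mpr (by linarith))⟩

theorem IsUniformSR.exists_limsup_edist_lt (hSR : IsUniformSR E) {u : ℕ → E}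
    (hu : Bornology.IsBounded (Set.range u)) {p y : E} (hyp : y ≠ p)
    (hle : ∀ n, dist (u n) y ≤ dist (u n) p) :
    ∃ z, limsup (fun n => edist (u n) z) atTop < limsup (fun n => edist (u n) p) atTop := by
  set L := limsup (fun n => edist (u n) p) atTop
  have hLtop : L ≠ ⊤ := (limsup_edist_lt_top hu p).ne
  have hL0 : L ≠ 0 := limsup_edist_ne_zero hyp
    (Eventually.of_forall fun n => by simpa only [edist_dist] using ofReal_le_ofReal (hle n))
  have hr : 0 < L.toReal := toReal_pos hL0 hLtop
  obtain ⟨δ, hδ, hcheb⟩ := hSR.exists_chebyshevRadius_lt hyp.symm hr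
  rw [ofReal_toReal hLtop] at hcheb
  refine exists_limsup_edist_lt_of_chebyshevRadius_lt ?_ hcheb
  have hL : L < ENNReal.ofReal (L.toReal + δ) := by
    rw [ofReal_add hr.le hδ.le, ofReal_toReal hLtop]
    exact lt_add_right hLtop (ofReal_pos.mpr hδ).ne'
  filter_upwards [eventually_lt_of_limsup_lt hL] with n hn
  have hp : dist (u n) p ≤ L.toReal + δ := (edist_lt_ofReal.mp hn).le
  exact ⟨hp, (hle n).trans hp⟩

theorem DeltaConv.polarLim (hSR : IsUniformSR E) {x : ℕ → E} {p : E}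
    (hb : Bornology.IsBounded (Set.range x)) (hΔ : DeltaConv x p) : PolarLim x p := by
  intro y hyp
  by_contra! hfreq
  obtain ⟨k, hk, hky⟩ := extraction_of_frequently_atTop (frequently_atTop.mpr hfreq)
  obtain ⟨z, hz⟩ :=
    hSR.exists_limsup_edist_lt (hb.subset (Set.range_comp_subset_range k x)) hyp hky
  exact (hΔ k hk z).not_gt hz

/-- in a uniform SR space, a bounded sequence Δ-converges to `p`
iff `p` is its polar limit. -/
theorem stmt_10 (hSR : IsUniformSR E) (x : ℕ → E) (p : E)
    (hb : Bornology.IsBounded (Set.range x)) :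
    DeltaConv x p ↔ PolarLim x p :=
  ⟨DeltaConv.polarLim hSR hb, PolarLim.deltaConv⟩
end
end

section
/- Let (E,d) be a uniform SR (Staples rotund) metric space, let (x_n) be a bounded sequence in E, and let I(y) = limsup_n d(x_n,y) for y ∈ E. Then for every d̄ > 0 there exists ε > 0 such that whenever x, y ∈ E satisfy max(I(x), I(y)) < inf_{z∈E} I(z) + ε, one has d(x,y) < d̄. -/
/-!
Let `I(z) = limsup d(xₙ, z)` and `m = inf I`. If `m = 0`, take `ε = d̄/2`: some `xₙ` is then
within `d̄/2` of both `a` and `b`. If `m > 0`, take `ε = δ(m, d̄)`: were `d(a, b) ≥ d̄`, the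
sequence would eventually lie in `B_{m+ε}(a) ∩ B_{m+ε}(b)`, whose Chebyshev radius is at most
`m - ε`, and a near-center `z` of that intersection would have `I(z) ≤ m - ε < m`.
-/

open Filter Metric ENNReal MeasureTheory

noncomputable section

variable {E : Type*} [MetricSpace E]

section LimsupDist

variable {α ι : Type*} [PseudoMetricSpace α] {u : ι → α} {l : Filter ι}

theorem isBoundedUnder_le_dist_of_isBounded_range (hu : Bornology.IsBounded (Set.range u))
    (y : α) : IsBoundedUnder (· ≤ ·) l (fun n => dist (u n) y) := by
  obtain ⟨r, hr⟩ := hu.subset_closedBall y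
  exact isBoundedUnder_of ⟨r, fun n => mem_closedBall.mp (hr (Set.mem_range_self n))⟩

theorem limsup_dist_nonneg [NeBot l] (hu : Bornology.IsBounded (Set.range u)) (y : α) :
    0 ≤ limsup (fun n => dist (u n) y) l :=
  le_limsup_of_frequently_le (Frequently.of_forall fun _ => dist_nonneg)
    (isBoundedUnder_le_dist_of_isBounded_range hu y)

theorem limsup_dist_le_of_eventually_le [NeBot l] {y : α} {r : ℝ}
    (h : ∀ᶠ n in l, dist (u n) y ≤ r) : limsup (fun n => dist (u n) y) l ≤ r :=
  limsup_le_of_le (isCoboundedUnder_le_of_le l fun _ => dist_nonneg) h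

theorem eventually_mem_closedBall_of_limsup_dist_lt (hu : Bornology.IsBounded (Set.range u))
    {y : α} {r : ℝ} (h : limsup (fun n => dist (u n) y) l < r) :
    ∀ᶠ n in l, u n ∈ closedBall y r :=
  (eventually_lt_of_limsup_lt h (isBoundedUnder_le_dist_of_isBounded_range hu y)).mono
    fun _ hn => mem_closedBall.mpr hn.le

theorem dist_lt_add_of_limsup_dist_lt [NeBot l] (hu : Bornology.IsBounded (Set.range u))
    {a b : α} {r s : ℝ} (ha : limsup (fun n => dist (u n) a) l < r)
    (hb : limsup (fun n => dist (u n) b) l < s) : dist a b < r + s := by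
  have hr := eventually_lt_of_limsup_lt ha (isBoundedUnder_le_dist_of_isBounded_range hu a)
  have hs := eventually_lt_of_limsup_lt hb (isBoundedUnder_le_dist_of_isBounded_range hu b)
  obtain ⟨n, hna, hnb⟩ := (hr.and hs).exists
  calc dist a b ≤ dist (u n) a + dist (u n) b := dist_triangle_left a b (u n)
    _ < r + s := add_lt_add hna hnb

end LimsupDist

theorem ofReal_iInf_limsup_dist_le_chebyshevRadius {ι : Type*} {l : Filter ι} [NeBot l]
    {u : ι → E} (hu : Bornology.IsBounded (Set.range u)) {X : Set E}
    (hX : ∀ᶠ n in l, u n ∈ X) :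
    ENNReal.ofReal (⨅ z, limsup (fun n => dist (u n) z) l) ≤ chebyshevRadius X := by
  refine le_iInf fun z => ?_
  set S := ⨆ w ∈ X, edist z w
  rcases eq_or_ne S ⊤ with hS | hS
  · exact hS ▸ le_top
  have hInf_le : ⨅ z, limsup (fun n => dist (u n) z) l ≤ limsup (fun n => dist (u n) z) l :=
    ciInf_le ⟨0, Set.forall_mem_range.mpr (limsup_dist_nonneg hu)⟩ z
  refine ENNReal.ofReal_le_of_le_toReal (hInf_le.trans (limsup_dist_le_of_eventually_le ?_))
  filter_upwards [hX] with n hn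
  rw [dist_comm, dist_edist]
  exact ENNReal.toReal_mono hS (le_iSup₂ (f := fun w _ => edist z w) (u n) hn)

/-- in a uniform SR space, for `I(y) = limsup d(x_n,y)` and any `d̄ > 0`
there is `ε > 0` such that `max(I(x),I(y)) < inf I + ε` implies `d(x,y) < d̄`. -/
theorem stmt_11 (hSR : IsUniformSR E) (x : ℕ → E)
    (hb : Bornology.IsBounded (Set.range x)) :
    ∀ dbar : ℝ, 0 < dbar → ∃ ε : ℝ, 0 < ε ∧ ∀ a b : E,
      max (Filter.limsup (fun n => dist (x n) a) Filter.atTop)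
          (Filter.limsup (fun n => dist (x n) b) Filter.atTop) <
        (⨅ z : E, Filter.limsup (fun n => dist (x n) z) Filter.atTop) + ε →
      dist a b < dbar := by
  intro dbar hdbar
  obtain ⟨δ, hδ_pos, hδ⟩ := hSR
  set m := ⨅ z : E, limsup (fun n => dist (x n) z) atTop
  have hm_nonneg : 0 ≤ m := Real.iInf_nonneg (limsup_dist_nonneg hb)
  rcases hm_nonneg.eq_or_lt with hm | hm
  · refine ⟨dbar / 2, half_pos hdbar, fun a b hab => ?_⟩
    rw [← hm, zero_add, max_lt_iff] at hab
    simpa using dist_lt_add_of_limsup_dist_lt hb hab.1 hab.2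
  · refine ⟨δ m dbar, hδ_pos m dbar hm hdbar, fun a b hab => ?_⟩
    by_contra! hfar
    rw [max_lt_iff] at hab
    have hX := (eventually_mem_closedBall_of_limsup_dist_lt hb hab.1).and
      (eventually_mem_closedBall_of_limsup_dist_lt hb hab.2)
    have hle := (ofReal_iInf_limsup_dist_le_chebyshevRadius hb hX).trans
      (hδ m dbar hm hdbar a b hfar)
    rw [ENNReal.ofReal_le_ofReal_iff'] at hle
    have hδm := hδ_pos m dbar hm hdbar
    rcases hle with hle | hle <;> linarith
end
end

section
/- Let (E,d) be a uniform SR (Staples rotund) metric space, let (x_n) be a bounded sequence in E, and let I(y) = limsup_n d(x_n,y) for y ∈ E. Then the functional I admits at most one minimum point; that is, if x and y both satisfy I(x) = I(y) = inf_{z∈E} I(z), then x = y. -/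
open Filter Metric ENNReal MeasureTheory

noncomputable section

variable {E : Type*} [MetricSpace E]

open Topology

variable {ι : Type*} {l : Filter ι}

lemma isBoundedUnder_le_dist_s12 {x : ι → E} (hx : Bornology.IsBounded (Set.range x)) (z : E) :
    IsBoundedUnder (· ≤ ·) l (fun n => dist (x n) z) := by
  obtain ⟨R, hR⟩ := hx.subset_closedBall z
  exact isBoundedUnder_of ⟨R, fun n => hR (Set.mem_range_self n)⟩

lemma limsup_dist_nonneg_s12 [l.NeBot] {x : ι → E} (hx : Bornology.IsBounded (Set.range x)) (z : E) :
    0 ≤ limsup (fun n => dist (x n) z) l :=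
  le_limsup_of_frequently_le (Frequently.of_forall fun _ => dist_nonneg)
    (isBoundedUnder_le_dist_s12 hx z)

lemma tendsto_of_limsup_dist_eq_zero {x : ι → E} (hx : Bornology.IsBounded (Set.range x)) {a : E}
    (h : limsup (fun n => dist (x n) a) l = 0) : Tendsto x l (𝓝 a) := by
  rw [tendsto_iff_dist_tendsto_zero, tendsto_order]
  exact ⟨fun ε hε => Eventually.of_forall fun n => hε.trans_le dist_nonneg,
    fun ε hε => eventually_lt_of_limsup_lt (h ▸ hε) (isBoundedUnder_le_dist_s12 hx a)⟩

lemma exists_forall_dist_le_of_chebyshevRadius_lt {X : Set E} {r : ℝ}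
    (h : chebyshevRadius X < ENNReal.ofReal r) : ∃ z s, s < r ∧ ∀ w ∈ X, dist z w ≤ s := by
  obtain ⟨z, hz⟩ := iInf_lt_iff.1 h
  refine ⟨z, _, ENNReal.toReal_lt_of_lt_ofReal hz, fun w hw => ?_⟩
  rw [dist_edist]
  exact ENNReal.toReal_mono hz.ne_top (le_biSup _ hw)

/-- Eventually `x n` lies in the lens `B_{r+δ}(a) ∩ B_{r+δ}(b)`, and a near-Chebyshev center `z`
of the lens is within `r - δ` of all of it. -/
lemma IsUniformSR.exists_limsup_dist_lt [l.NeBot] (hSR : IsUniformSR E) {x : ι → E}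
    (hx : Bornology.IsBounded (Set.range x)) {a b : E} (hab : a ≠ b) {r : ℝ} (hr : 0 < r)
    (ha : limsup (fun n => dist (x n) a) l ≤ r) (hb : limsup (fun n => dist (x n) b) l ≤ r) :
    ∃ z, limsup (fun n => dist (x n) z) l < r := by
  obtain ⟨δ, hδ_pos, hδ⟩ := hSR
  have hab' := dist_pos.2 hab
  have hε := hδ_pos r _ hr hab'
  set ε := δ r (dist a b)
  obtain ⟨z, s, hsr, hz⟩ := exists_forall_dist_le_of_chebyshevRadius_lt <|
    (hδ r _ hr hab' a b le_rfl).trans_lt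
      ((ENNReal.ofReal_lt_ofReal_iff hr).2 (by linarith))
  have hmem : ∀ᶠ n in l, x n ∈ closedBall a (r + ε) ∩ closedBall b (r + ε) := by
    filter_upwards [eventually_lt_of_limsup_lt (ha.trans_lt (lt_add_of_pos_right r hε))
        (isBoundedUnder_le_dist_s12 hx a),
      eventually_lt_of_limsup_lt (hb.trans_lt (lt_add_of_pos_right r hε))
        (isBoundedUnder_le_dist_s12 hx b)] with n hna hnb
    exact ⟨hna.le, hnb.le⟩
  refine ⟨z, (limsup_le_of_le (isCoboundedUnder_le_of_le l fun _ => dist_nonneg) ?_).trans_lt hsr⟩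
  exact hmem.mono fun n hn => (dist_comm _ _).trans_le (hz _ hn)

/-- in a uniform SR space, the functional `I(y) = limsup d(x_n,y)`
associated with a bounded sequence has at most one minimum point. -/
theorem stmt_12 (hSR : IsUniformSR E) (x : ℕ → E)
    (hb : Bornology.IsBounded (Set.range x)) (a b : E)
    (ha : Filter.limsup (fun n => dist (x n) a) Filter.atTop =
      ⨅ z : E, Filter.limsup (fun n => dist (x n) z) Filter.atTop)
    (hbm : Filter.limsup (fun n => dist (x n) b) Filter.atTop =
      ⨅ z : E, Filter.limsup (fun n => dist (x n) z) Filter.atTop) :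
    a = b := by
  have : Nonempty E := ⟨a⟩
  set r := ⨅ z : E, limsup (fun n => dist (x n) z) atTop
  have hr : 0 ≤ r := le_ciInf (limsup_dist_nonneg_s12 hb)
  by_contra hab
  rcases hr.eq_or_lt with hr0 | hr_pos
  · exact hab <| tendsto_nhds_unique (tendsto_of_limsup_dist_eq_zero hb (ha.trans hr0.symm))
      (tendsto_of_limsup_dist_eq_zero hb (hbm.trans hr0.symm))
  · obtain ⟨z, hz⟩ := hSR.exists_limsup_dist_lt hb hab hr_pos ha.le hbm.le
    exact hz.not_ge (ciInf_le ⟨0, Set.forall_mem_range.2 (limsup_dist_nonneg_s12 hb)⟩ z)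
end
end

section
/- Let (E,d) be a complete uniform SR (Staples rotund) metric space. Then every bounded sequence in E has a subsequence which has a polar limit in E. -/
open Filter Metric ENNReal MeasureTheory

noncomputable section

variable {E : Type*} [MetricSpace E]

/-! Limsups are taken in `ℝ≥0∞`, so that they need no boundedness side conditions, and a
subsequence is encoded by the filter `cofinite ⊓ 𝓟 D` of an infinite set `D ⊆ ℕ`.

The asymptotic radius `r(l) = inf_y limsup_l d(x_n, y)` can only drop when passing to a
subsequence, so a diagonal argument gives a subsequence on which it no longer drops at all.
In a uniform SR space, two points `a, b` at distance `≥ d̄` whose asymptotic radii are both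
below `r + δ(r, d̄)` would confine the sequence eventually to `B_{r+δ}(a) ∩ B_{r+δ}(b)`, and the
Chebyshev centre of that lens would have asymptotic radius `< r`. Hence almost-centres are
close to each other, they form a Cauchy sequence, and its limit `p` is an asymptotic centre.
If `d(x_n, w) ≤ d(x_n, p)` for infinitely many `n`, then along those `n` the points `p` and `w`
are both asymptotic centres of a subsequence with the same radius `r`, so `w = p`. -/

open Topology

section AsymptoticRadius

variable {ι : Type*} {l : Filter ι} {x : ι → E}

def asymptoticRadiusAt (l : Filter ι) (x : ι → E) (y : E) : ℝ≥0∞ :=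
  limsup (fun n => edist (x n) y) l

def asymptoticRadius (l : Filter ι) (x : ι → E) : ℝ≥0∞ :=
  ⨅ y, asymptoticRadiusAt l x y

lemma asymptoticRadius_le_asymptoticRadiusAt (y : E) :
    asymptoticRadius l x ≤ asymptoticRadiusAt l x y :=
  iInf_le _ y

lemma asymptoticRadiusAt_mono {l' : Filter ι} (h : l ≤ l') (y : E) :
    asymptoticRadiusAt l x y ≤ asymptoticRadiusAt l' x y :=
  limsup_le_limsup_of_le h

lemma asymptoticRadius_mono : Monotone fun l : Filter ι => asymptoticRadius l x :=
  fun _ _ h => iInf_mono fun y => asymptoticRadiusAt_mono h y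

lemma asymptoticRadius_ne_top [Nonempty ι] (hx : Bornology.IsBounded (Set.range x)) :
    asymptoticRadius l x ≠ ⊤ := by
  inhabit ι
  obtain ⟨C, hC⟩ := (Metric.isBounded_iff_subset_closedBall (x default)).1 hx
  refine ne_top_of_le_ne_top (ofReal_ne_top (r := C)) <|
    (asymptoticRadius_le_asymptoticRadiusAt (x default)).trans (limsup_le_of_le ?_ ?_)
  · isBoundedDefault
  · exact Eventually.of_forall fun n =>
      (edist_dist _ _).trans_le (ofReal_le_ofReal (hC (Set.mem_range_self n)))

lemma asymptoticRadiusAt_le_add_edist [l.NeBot] (p q : E) :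
    asymptoticRadiusAt l x p ≤ asymptoticRadiusAt l x q + edist q p :=
  calc asymptoticRadiusAt l x p
      ≤ limsup (fun n => edist (x n) q + edist q p) l :=
        limsup_le_limsup (Eventually.of_forall fun n => edist_triangle _ _ _)
    _ = asymptoticRadiusAt l x q + edist q p :=
        limsup_add_const l _ _ (by isBoundedDefault) (by isBoundedDefault)

lemma edist_lt_add_of_asymptoticRadiusAt_lt [l.NeBot] {a b : E} {s t : ℝ≥0∞}
    (hs : asymptoticRadiusAt l x a < s) (ht : asymptoticRadiusAt l x b < t) :
    edist a b < s + t := by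
  obtain ⟨n, hna, hnb⟩ :=
    ((eventually_lt_of_limsup_lt hs).and (eventually_lt_of_limsup_lt ht)).exists
  exact (edist_triangle_left a b (x n)).trans_lt (ENNReal.add_lt_add hna hnb)

lemma exists_asymptoticRadiusAt_lt_of_chebyshevRadius_lt {X : Set E} {c : ℝ≥0∞}
    (hX : chebyshevRadius X < c) (hx : ∀ᶠ n in l, x n ∈ X) :
    ∃ z, asymptoticRadiusAt l x z < c := by
  obtain ⟨z, hz⟩ := iInf_lt_iff.1 hX
  refine ⟨z, lt_of_le_of_lt (limsup_le_of_le ?_ ?_) hz⟩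
  · isBoundedDefault
  · filter_upwards [hx] with n hn
    rw [edist_comm]
    exact le_biSup (edist z) hn

lemma IsUniformSR.exists_pos_forall_dist_lt (hSR : IsUniformSR E) [l.NeBot] {ε : ℝ}
    (hε : 0 < ε) :
    ∃ η : ℝ≥0∞, 0 < η ∧ ∀ a b : E, asymptoticRadiusAt l x a < asymptoticRadius l x + η →
      asymptoticRadiusAt l x b < asymptoticRadius l x + η → dist a b < ε := by
  set R := asymptoticRadius l x
  obtain ⟨δ, hδpos, hδ⟩ := hSR
  rcases eq_or_ne R 0 with hR0 | hR0
  · refine ⟨ENNReal.ofReal (ε / 2), by simpa using hε, fun a b ha hb => ?_⟩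
    rw [hR0, zero_add] at ha hb
    have hab := edist_lt_add_of_asymptoticRadiusAt_lt ha hb
    rwa [← ofReal_add (by positivity) (by positivity), add_halves, edist_lt_ofReal] at hab
  rcases eq_or_ne R ⊤ with hRtop | hRtop
  · refine ⟨1, one_pos, fun a b ha _ => absurd ha (not_lt.2 ?_)⟩
    simpa [R, hRtop] using asymptoticRadius_le_asymptoticRadiusAt (l := l) (x := x) a
  set r := R.toReal
  have hr : 0 < r := ENNReal.toReal_pos hR0 hRtop
  set η := δ r ε
  have hη : 0 < η := hδpos r ε hr hε
  refine ⟨ENNReal.ofReal η, by simpa using hη, fun a b ha hb => ?_⟩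
  by_contra! hab
  rw [← ofReal_toReal hRtop, ← ofReal_add hr.le hη.le] at ha hb
  have hx : ∀ᶠ n in l, x n ∈ closedBall a (r + η) ∩ closedBall b (r + η) := by
    filter_upwards [eventually_lt_of_limsup_lt ha, eventually_lt_of_limsup_lt hb] with n hna hnb
    exact ⟨(edist_lt_ofReal.1 hna).le, (edist_lt_ofReal.1 hnb).le⟩
  have hcheb : chebyshevRadius (closedBall a (r + η) ∩ closedBall b (r + η)) < R := by
    rw [← ofReal_toReal hRtop]
    exact (hδ r ε hr hε a b hab).trans_lt ((ofReal_lt_ofReal_iff hr).2 (sub_lt_self r hη))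
  obtain ⟨z, hz⟩ := exists_asymptoticRadiusAt_lt_of_chebyshevRadius_lt hcheb hx
  exact hz.not_ge (asymptoticRadius_le_asymptoticRadiusAt z)

lemma IsUniformSR.exists_asymptoticRadiusAt_eq [CompleteSpace E] (hSR : IsUniformSR E)
    [l.NeBot] (hR : asymptoticRadius l x ≠ ⊤) :
    ∃ p, asymptoticRadiusAt l x p = asymptoticRadius l x := by
  set R := asymptoticRadius l x
  have hy : ∀ m : ℕ, ∃ y, asymptoticRadiusAt l x y < R + (m : ℝ≥0∞)⁻¹ := fun m =>
    iInf_lt_iff.1 (ENNReal.lt_add_right hR (by simp))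
  choose y hy using hy
  have hcauchy : CauchySeq y := Metric.cauchySeq_iff.2 fun ε hε => by
    obtain ⟨η, hη, hdist⟩ := hSR.exists_pos_forall_dist_lt (l := l) (x := x) hε
    obtain ⟨N, hN⟩ := ENNReal.exists_inv_nat_lt hη.ne'
    have hyη : ∀ m ≥ N, asymptoticRadiusAt l x (y m) < R + η := fun m hm =>
      (hy m).trans_le <|
        add_le_add_right ((ENNReal.inv_le_inv.2 (Nat.cast_le.2 hm)).trans hN.le) R
    exact ⟨N, fun m hm n hn => hdist _ _ (hyη m hm) (hyη n hn)⟩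
  obtain ⟨p, hp⟩ := cauchySeq_tendsto_of_complete hcauchy
  refine ⟨p, le_antisymm ?_ (asymptoticRadius_le_asymptoticRadiusAt p)⟩
  have hlim : Tendsto (fun m : ℕ => R + (m : ℝ≥0∞)⁻¹ + edist (y m) p) atTop (𝓝 R) := by
    simpa using ((tendsto_const_nhds (x := R)).add ENNReal.tendsto_inv_nat_nhds_zero).add
      (hp.edist (tendsto_const_nhds (x := p)))
  refine ge_of_tendsto' hlim fun m => ?_
  calc asymptoticRadiusAt l x p ≤ asymptoticRadiusAt l x (y m) + edist (y m) p :=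
        asymptoticRadiusAt_le_add_edist p (y m)
    _ ≤ R + (m : ℝ≥0∞)⁻¹ + edist (y m) p := by gcongr; exact (hy m).le

lemma IsUniformSR.exists_forall_ne_eventually_dist_lt [CompleteSpace E] (hSR : IsUniformSR E)
    [l.NeBot] (hR : asymptoticRadius l x ≠ ⊤)
    (hreg : ∀ s, (l ⊓ 𝓟 s).NeBot → asymptoticRadius l x ≤ asymptoticRadius (l ⊓ 𝓟 s) x) :
    ∃ p, ∀ w ≠ p, ∀ᶠ n in l, dist (x n) p < dist (x n) w := by
  obtain ⟨p, hp⟩ := hSR.exists_asymptoticRadiusAt_eq hR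
  refine ⟨p, fun w hw => ?_⟩
  by_contra h
  set s := {n | dist (x n) w ≤ dist (x n) p}
  have : (l ⊓ 𝓟 s).NeBot :=
    frequently_iff_neBot.1 ((not_eventually.1 h).mono fun n hn => not_lt.1 hn)
  obtain ⟨η, hη, hdist⟩ :=
    hSR.exists_pos_forall_dist_lt (l := l ⊓ 𝓟 s) (x := x) (dist_pos.2 hw)
  have hRs : asymptoticRadius (l ⊓ 𝓟 s) x ≠ ⊤ :=
    ne_top_of_le_ne_top hR (asymptoticRadius_mono inf_le_left)
  have hpη : asymptoticRadiusAt (l ⊓ 𝓟 s) x p < asymptoticRadius (l ⊓ 𝓟 s) x + η :=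
    calc asymptoticRadiusAt (l ⊓ 𝓟 s) x p ≤ asymptoticRadiusAt l x p :=
          asymptoticRadiusAt_mono inf_le_left p
      _ = asymptoticRadius l x := hp
      _ ≤ asymptoticRadius (l ⊓ 𝓟 s) x := hreg s this
      _ < asymptoticRadius (l ⊓ 𝓟 s) x + η := ENNReal.lt_add_right hRs hη.ne'
  have hwη : asymptoticRadiusAt (l ⊓ 𝓟 s) x w < asymptoticRadius (l ⊓ 𝓟 s) x + η := by
    refine (limsup_le_limsup ?_).trans_lt hpη
    filter_upwards [mem_inf_of_right (mem_principal_self s)] with n hn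
    rw [edist_dist, edist_dist]
    exact ofReal_le_ofReal hn
  exact lt_irrefl _ (hdist w p hwη hpη)

end AsymptoticRadius

lemma cofinite_inf_principal_le_of_diff_finite {α : Type*} {S T : Set α}
    (h : (T \ S).Finite) : cofinite ⊓ 𝓟 T ≤ cofinite ⊓ 𝓟 S :=
  le_inf inf_le_left <| le_principal_iff.2 <|
    mem_inf_of_inter h.compl_mem_cofinite (mem_principal_self T) fun _ ⟨hn, hnT⟩ =>
      by_contra fun hnS => hn ⟨hnT, hnS⟩

lemma exists_infinite_forall_diff_finite {S : ℕ → Set ℕ} (hS : Antitone S)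
    (hinf : ∀ m, (S m).Infinite) : ∃ D : Set ℕ, D.Infinite ∧ ∀ m, (D \ S m).Finite := by
  obtain ⟨d, hd, hdS⟩ :=
    extraction_forall_of_frequently fun m => Nat.frequently_atTop_iff_infinite.2 (hinf m)
  refine ⟨Set.range d, Set.infinite_range_of_injective hd.injective,
    fun m => ((Set.finite_Iio m).image d).subset ?_⟩
  rintro _ ⟨⟨j, rfl⟩, hj⟩
  exact ⟨j, lt_of_not_ge fun hmj => hj (hS hmj (hdS j)), rfl⟩

lemma exists_infinite_forall_subset_le {Φ : Filter ℕ → ℝ≥0∞} (hΦ : Monotone Φ)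
    (hΦtop : Φ cofinite ≠ ⊤) :
    ∃ D : Set ℕ, D.Infinite ∧
      ∀ T ⊆ D, T.Infinite → Φ (cofinite ⊓ 𝓟 D) ≤ Φ (cofinite ⊓ 𝓟 T) := by
  let ρ : Set ℕ → ℝ≥0∞ := fun S => ⨅ (T ⊆ S) (_ : T.Infinite), Φ (cofinite ⊓ 𝓟 T)
  have hρ_le : ∀ S T, T ⊆ S → T.Infinite → ρ S ≤ Φ (cofinite ⊓ 𝓟 T) := fun S T hTS hT =>
    (iInf₂_le T hTS).trans (iInf_le (fun _ => Φ (cofinite ⊓ 𝓟 T)) hT)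
  -- `S.Infinite →` sits inside the `∃` so that `choose` below yields a total function
  have hnext : ∀ (m : ℕ) (S : Set ℕ), ∃ T, S.Infinite →
      T ⊆ S ∧ T.Infinite ∧ Φ (cofinite ⊓ 𝓟 T) < ρ S + (m : ℝ≥0∞)⁻¹ := by
    intro m S
    by_cases hS : S.Infinite
    · have hρ : ρ S ≠ ⊤ := ne_top_of_le_ne_top hΦtop <|
        (hρ_le S S subset_rfl hS).trans (hΦ inf_le_left)
      obtain ⟨T, hTS, hT, hΦT⟩ :
          ∃ T ⊆ S, T.Infinite ∧ Φ (cofinite ⊓ 𝓟 T) < ρ S + (m : ℝ≥0∞)⁻¹ := by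
        simpa only [ρ, iInf_lt_iff, exists_prop] using ENNReal.lt_add_right hρ (by simp)
      exact ⟨T, fun _ => ⟨hTS, hT, hΦT⟩⟩
    · exact ⟨∅, fun h => absurd h hS⟩
  choose next hnext using hnext
  let S : ℕ → Set ℕ := fun m => Nat.rec (motive := fun _ => Set ℕ) Set.univ next m
  have hSinf : ∀ m, (S m).Infinite := fun m => by
    induction m with
    | zero => exact Set.infinite_univ
    | succ m ih => exact (hnext m (S m) ih).2.1
  have hSsucc := fun m => hnext m (S m) (hSinf m)
  obtain ⟨D, hD, hDS⟩ :=
    exists_infinite_forall_diff_finite (antitone_nat_of_succ_le fun m => (hSsucc m).1) hSinf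
  refine ⟨D, hD, fun T hTD hT => ?_⟩
  have hTS : ∀ m, (T ∩ S m).Infinite := fun m => by
    simpa only [Set.sdiff_sdiff_right_self] using
      hT.sdiff ((hDS m).subset (Set.sdiff_subset_sdiff_left hTD))
  have key : ∀ m : ℕ, Φ (cofinite ⊓ 𝓟 D) ≤ Φ (cofinite ⊓ 𝓟 T) + (m : ℝ≥0∞)⁻¹ := fun m =>
    calc Φ (cofinite ⊓ 𝓟 D) ≤ Φ (cofinite ⊓ 𝓟 (S (m + 1))) :=
          hΦ (cofinite_inf_principal_le_of_diff_finite (hDS (m + 1)))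
      _ ≤ ρ (S m) + (m : ℝ≥0∞)⁻¹ := (hSsucc m).2.2.le
      _ ≤ Φ (cofinite ⊓ 𝓟 (T ∩ S m)) + (m : ℝ≥0∞)⁻¹ :=
          by gcongr; exact hρ_le _ _ Set.inter_subset_right (hTS m)
      _ ≤ Φ (cofinite ⊓ 𝓟 T) + (m : ℝ≥0∞)⁻¹ :=
          by gcongr; exact hΦ (inf_le_inf_left _ (principal_mono.2 Set.inter_subset_left))
  exact ge_of_tendsto'
    (by simpa using tendsto_const_nhds.add ENNReal.tendsto_inv_nat_nhds_zero) key

/-- in a complete uniform SR space, every bounded sequence has a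
subsequence which has a polar limit. -/
theorem stmt_15 [CompleteSpace E] (hSR : IsUniformSR E) (x : ℕ → E)
    (hb : Bornology.IsBounded (Set.range x)) :
    ∃ (k : ℕ → ℕ) (p : E), StrictMono k ∧ PolarLim (fun n => x (k n)) p := by
  obtain ⟨D, hD, hreg⟩ :=
    exists_infinite_forall_subset_le asymptoticRadius_mono (asymptoticRadius_ne_top hb)
  have : (cofinite ⊓ 𝓟 D).NeBot := hD.cofinite_inf_principal_neBot
  obtain ⟨p, hp⟩ := hSR.exists_forall_ne_eventually_dist_lt (l := cofinite ⊓ 𝓟 D)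
    (asymptoticRadius_ne_top hb)
    fun s hs => by
      rw [inf_assoc, inf_principal] at hs ⊢
      exact hreg _ Set.inter_subset_left (cofinite_inf_principal_neBot_iff.1 hs)
  obtain ⟨k, hk, hkD⟩ := extraction_of_frequently_atTop (Nat.frequently_atTop_iff_infinite.2 hD)
  have hk_tendsto : Tendsto k atTop (cofinite ⊓ 𝓟 D) :=
    tendsto_inf.2 ⟨Nat.cofinite_eq_atTop ▸ hk.tendsto_atTop,
      tendsto_principal.2 (Eventually.of_forall hkD)⟩
  exact ⟨k, p, hk, fun w hw => eventually_atTop.1 (hk_tendsto.eventually (hp w hw))⟩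
end
end

section
/- Let H be a real Hilbert space, let (x_n) be a sequence in H and let x ∈ H. Then x is a polar limit of (x_n) (with respect to the norm-induced metric) if and only if (x_n) converges weakly to x, i.e. ⟨x_n − x, v⟩ → 0 for every v ∈ H. -/
/-!
Since `‖a - (p + w)‖² = ‖a - p‖² - 2⟪a - p, w⟫ + ‖w‖²`, the point `x n` is closer to `p` than to
`p + w` exactly when `2⟪x n - p, w⟫ < ‖w‖²`. Weak convergence makes the left side tend to `0`, so
this holds eventually for every `w ≠ 0`. Conversely, applying it to `w = s • v` with `s` small of
either sign traps `⟪x n - p, v⟫` in an arbitrarily small interval around `0`.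
-/

open Filter Metric ENNReal MeasureTheory

noncomputable section

variable {E : Type*} [MetricSpace E]

section Hilbert

variable {H : Type*} [NormedAddCommGroup H] [InnerProductSpace ℝ H]

theorem dist_lt_dist_add_iff_two_mul_inner_lt (a p w : H) :
    dist a p < dist a (p + w) ↔ 2 * (inner ℝ (a - p) w : ℝ) < ‖w‖ ^ 2 := by
  have expand : ‖a - (p + w)‖ ^ 2 = ‖a - p‖ ^ 2 - 2 * (inner ℝ (a - p) w : ℝ) + ‖w‖ ^ 2 := by
    rw [show a - (p + w) = (a - p) - w by abel, norm_sub_sq_real]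
  rw [dist_eq_norm, dist_eq_norm, ← sq_lt_sq₀ (norm_nonneg _) (norm_nonneg _), expand]
  constructor <;> intro h <;> linarith

theorem PolarLim.eventually_two_mul_inner_lt {x : ℕ → H} {p : H} (hx : PolarLim x p) {w : H}
    (hw : w ≠ 0) :
    ∀ᶠ n in atTop, 2 * (inner ℝ (x n - p) w : ℝ) < ‖w‖ ^ 2 := by
  obtain ⟨M, hM⟩ := hx (p + w) (by simpa using hw)
  exact eventually_atTop.2
    ⟨M, fun n hn => (dist_lt_dist_add_iff_two_mul_inner_lt _ _ _).1 (hM n hn)⟩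

/-- Testing the polar limit against `p + (2t / ‖v‖²) • v`. -/
theorem PolarLim.eventually_mul_inner_lt_sq {x : ℕ → H} {p : H} (hx : PolarLim x p) {v : H}
    (hv : v ≠ 0) {t : ℝ} (ht : t ≠ 0) :
    ∀ᶠ n in atTop, t * (inner ℝ (x n - p) v : ℝ) < t ^ 2 := by
  have hc : 0 < ‖v‖ ^ 2 := by positivity
  have hw : (2 * t / ‖v‖ ^ 2) • v ≠ 0 := smul_ne_zero (by positivity) hv
  filter_upwards [hx.eventually_two_mul_inner_lt hw] with n hn
  rw [real_inner_smul_right, norm_smul, mul_pow, Real.norm_eq_abs, sq_abs] at hn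
  have key : 4 * t * (inner ℝ (x n - p) v : ℝ) / ‖v‖ ^ 2 < 4 * t ^ 2 / ‖v‖ ^ 2 := by
    convert hn using 1 <;> field_simp <;> ring
  rw [div_lt_div_iff_of_pos_right hc] at key
  linarith

theorem PolarLim.tendsto_inner {x : ℕ → H} {p : H} (hx : PolarLim x p) (v : H) :
    Tendsto (fun n => (inner ℝ (x n - p) v : ℝ)) atTop (nhds 0) := by
  rcases eq_or_ne v 0 with rfl | hv
  · simp
  refine tendsto_order.2 ⟨fun a ha => ?_, fun b hb => ?_⟩
  · filter_upwards [hx.eventually_mul_inner_lt_sq hv ha.ne] with n hn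
    nlinarith
  · filter_upwards [hx.eventually_mul_inner_lt_sq hv hb.ne'] with n hn
    nlinarith

theorem polarLim_of_tendsto_inner {x : ℕ → H} {p : H}
    (hx : ∀ v : H, Tendsto (fun n => (inner ℝ (x n - p) v : ℝ)) atTop (nhds 0)) :
    PolarLim x p := by
  intro y hy
  have hw : 0 < ‖y - p‖ ^ 2 / 2 := by
    have : y - p ≠ 0 := sub_ne_zero.2 hy
    positivity
  obtain ⟨M, hM⟩ := eventually_atTop.1 ((hx (y - p)).eventually (gt_mem_nhds hw))
  refine ⟨M, fun n hn => ?_⟩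
  rw [show y = p + (y - p) by abel, dist_lt_dist_add_iff_two_mul_inner_lt]
  linarith [hM n hn]

end Hilbert

theorem stmt_18_general {H : Type*} [NormedAddCommGroup H] [InnerProductSpace ℝ H]
    (x : ℕ → H) (p : H) :
    PolarLim x p ↔
      ∀ v : H, Filter.Tendsto (fun n => (inner ℝ (x n - p) v : ℝ)) Filter.atTop (nhds 0) :=
  ⟨PolarLim.tendsto_inner, polarLim_of_tendsto_inner⟩

/-- in a real Hilbert space, polar convergence coincides with weak
convergence. -/
theorem stmt_18 {H : Type*} [NormedAddCommGroup H] [InnerProductSpace ℝ H]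
    [CompleteSpace H] (x : ℕ → H) (p : H) :
    PolarLim x p ↔
      ∀ v : H, Filter.Tendsto (fun n => (inner ℝ (x n - p) v : ℝ)) Filter.atTop (nhds 0) :=
  stmt_18_general x p
end
end
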